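/- Let A ∈ ℝ^{n×n} and C ∈ ℝ^{m×n}. If the pair (A,C) is observable, then (A,C) is detectable, i.e., there exists a matrix L ∈ ℝ^{n×m} such that A + LC is stable. -/

import Mathlib

open Matrix NormedSpace

/-- The pair `(A,C)` is observable: for every `x0 ≠ 0` there exists `τ > 0` with
`C e^{τA} x0 ≠ 0`. -/
def IsObservable {n m : ℕ} (A : Matrix (Fin n) (Fin n) ℝ)
    (C : Matrix (Fin m) (Fin n) ℝ) : Prop :=
  ∀ x0 : Fin n → ℝ, x0 ≠ 0 → ∃ τ : ℝ, 0 < τ ∧ C.mulVec ((exp (τ • A)).mulVec x0) ≠ 0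

namespace Stmt14

attribute [local instance] Matrix.linftyOpNormedAddCommGroup Matrix.linftyOpNormedSpace
  Matrix.linftyOpNormedRing Matrix.linftyOpNormedAlgebra

noncomputable section

/-! ### Complexification -/

/-- complexification of a real matrix -/
def cx {k l : ℕ} (P : Matrix (Fin k) (Fin l) ℝ) : Matrix (Fin k) (Fin l) ℂ :=
  P.map Complex.ofReal

/-- complexification of a real vector -/
def cv {k : ℕ} (x : Fin k → ℝ) : Fin k → ℂ := fun i => (x i : ℂ)

variable {a b c k l p : ℕ}

lemma cx_mul (P : Matrix (Fin k) (Fin l) ℝ) (R : Matrix (Fin l) (Fin p) ℝ) :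
    cx (P * R) = cx P * cx R :=
  Matrix.map_mul (f := Complex.ofRealHom)

lemma cx_add (P R : Matrix (Fin k) (Fin l) ℝ) : cx (P + R) = cx P + cx R := by
  ext i j; simp [cx]

lemma cx_neg (P : Matrix (Fin k) (Fin l) ℝ) : cx (-P) = -cx P := by
  ext i j; simp [cx]

lemma cx_transpose (P : Matrix (Fin k) (Fin l) ℝ) : cx Pᵀ = (cx P)ᵀ := by
  ext i j; simp [cx]

lemma cx_conjTranspose (P : Matrix (Fin k) (Fin l) ℝ) : (cx P)ᴴ = cx Pᵀ := by
  ext i j; simp [cx, conjTranspose_apply, Complex.conj_ofReal]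

lemma cx_smul (r : ℝ) (P : Matrix (Fin k) (Fin l) ℝ) : cx (r • P) = r • cx P := by
  ext i j; simp [cx, Complex.ofReal_mul, Complex.real_smul]

lemma cx_mulVec (P : Matrix (Fin k) (Fin l) ℝ) (x : Fin l → ℝ) :
    (cx P).mulVec (cv x) = cv (P.mulVec x) := by
  funext i
  exact (RingHom.map_mulVec Complex.ofRealHom P x i).symm

lemma cv_eq_zero {x : Fin k → ℝ} (h : cv x = 0) : x = 0 := by
  funext i
  have := congrFun h i
  simpa [cv] using this

lemma cx_exp (P : Matrix (Fin k) (Fin k) ℝ) : cx (exp P) = exp (cx P) := by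
  have hc : Continuous fun M : Matrix (Fin k) (Fin k) ℝ => M.map (Complex.ofReal) :=
    continuous_id.matrix_map Complex.continuous_ofReal
  exact map_exp (Complex.ofRealHom.mapMatrix (m := Fin k)) hc P

/-- mulVec on star of a complexified-real matrix commutes with star -/
lemma cx_mulVec_star (P : Matrix (Fin k) (Fin l) ℝ) (v : Fin l → ℂ) :
    cx P *ᵥ star v = star (cx P *ᵥ v) := by
  rw [Matrix.star_mulVec, cx_conjTranspose, cx_transpose, Matrix.vecMul_transpose]

/-! ### quadratic form helpers -/

lemma star_dot_self (w : Fin k → ℂ) :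
    star w ⬝ᵥ w = ((∑ j, Complex.normSq (w j) : ℝ) : ℂ) := by
  simp only [dotProduct, Pi.star_apply]
  push_cast
  refine Finset.sum_congr rfl fun j _ => ?_
  rw [mul_comm]
  exact (Complex.mul_conj (w j))

lemma quad_factor (B : Matrix (Fin k) (Fin l) ℂ) (v : Fin l → ℂ) :
    star v ⬝ᵥ ((Bᴴ * B) *ᵥ v) = star (B *ᵥ v) ⬝ᵥ (B *ᵥ v) := by
  rw [← Matrix.mulVec_mulVec, Matrix.star_mulVec, dotProduct_mulVec]

/-! ### continuous linear maps -/

def sandwichCLM (P : Matrix (Fin a) (Fin b) ℂ) (v : Fin c → ℂ) :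
    Matrix (Fin b) (Fin c) ℂ →L[ℝ] (Fin a → ℂ) :=
  LinearMap.toContinuousLinearMap
    { toFun := fun X => P *ᵥ (X *ᵥ v)
      map_add' := by intros; simp [Matrix.add_mulVec, Matrix.mulVec_add]
      map_smul' := by intros; simp [Matrix.smul_mulVec, Matrix.mulVec_smul] }

lemma sandwichCLM_apply (P : Matrix (Fin a) (Fin b) ℂ) (v : Fin c → ℂ)
    (X : Matrix (Fin b) (Fin c) ℂ) : sandwichCLM P v X = P *ᵥ (X *ᵥ v) := rfl

def mvCLM (v : Fin b → ℂ) : Matrix (Fin a) (Fin b) ℂ →L[ℝ] (Fin a → ℂ) :=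
  LinearMap.toContinuousLinearMap
    { toFun := fun X => X *ᵥ v
      map_add' := by intros; simp [Matrix.add_mulVec]
      map_smul' := by intros; simp [Matrix.smul_mulVec] }

def quadCLM (v : Fin a → ℂ) : Matrix (Fin a) (Fin a) ℂ →L[ℝ] ℂ :=
  LinearMap.toContinuousLinearMap
    { toFun := fun X => star v ⬝ᵥ (X *ᵥ v)
      map_add' := by intros; simp [Matrix.add_mulVec, dotProduct_add]
      map_smul' := by intros; simp [Matrix.smul_mulVec, dotProduct_smul] }

lemma quadCLM_apply (v : Fin a → ℂ) (X : Matrix (Fin a) (Fin a) ℂ) :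
    quadCLM v X = star v ⬝ᵥ (X *ᵥ v) := rfl

def cxCLM (k : ℕ) : Matrix (Fin k) (Fin k) ℝ →L[ℝ] Matrix (Fin k) (Fin k) ℂ :=
  LinearMap.toContinuousLinearMap
    { toFun := cx
      map_add' := cx_add
      map_smul' := cx_smul }

lemma cxCLM_apply (X : Matrix (Fin k) (Fin k) ℝ) : cxCLM k X = cx X := rfl

/-! ### integral positivity helper -/

lemma zero_of_integral_zero {h : ℝ → ℝ} (hc : Continuous h) (hnn : ∀ t, 0 ≤ h t)
    (hint : ∫ t in (0:ℝ)..1, h t = 0) {t₀ : ℝ} (ht₀ : t₀ ∈ Set.Ioo (0:ℝ) 1) :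
    h t₀ = 0 := by
  by_contra hne
  have hpos : 0 < h t₀ := lt_of_le_of_ne (hnn t₀) (Ne.symm hne)
  have hcont : ContinuousAt h t₀ := hc.continuousAt
  obtain ⟨δ, hδ, hball⟩ := Metric.eventually_nhds_iff.mp
    (continuous_const.continuousAt.eventually_lt hcont (half_lt_self hpos))
  set a' := max 0 (t₀ - δ/2)
  set b' := min 1 (t₀ + δ/2)
  have hab : a' < b' := by
    have h1 : a' ≤ t₀ := by
      apply max_le ht₀.1.le
      linarith
    have h2 : t₀ < b' := by
      apply lt_min ht₀.2
      linarith
    exact lt_of_le_of_lt h1 h2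
  have ha0 : 0 ≤ a' := le_max_left _ _
  have hb1 : b' ≤ 1 := min_le_left _ _
  have hmid : ∀ x ∈ Set.Ioo a' b', 0 < h x := by
    intro x hx
    have hda : t₀ - δ/2 ≤ a' := le_max_right _ _
    have hdb : b' ≤ t₀ + δ/2 := min_le_right _ _
    have : dist x t₀ < δ := by
      rw [Real.dist_eq, abs_lt]
      constructor <;> [linarith [hx.1]; linarith [hx.2]]
    have := hball this
    linarith
  have hsplit1 : (∫ t in (0:ℝ)..a', h t) + (∫ t in a'..b', h t) = ∫ t in (0:ℝ)..b', h t :=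
    intervalIntegral.integral_add_adjacent_intervals (hc.intervalIntegrable _ _)
      (hc.intervalIntegrable _ _)
  have hsplit2 : (∫ t in (0:ℝ)..b', h t) + (∫ t in b'..1, h t) = ∫ t in (0:ℝ)..1, h t :=
    intervalIntegral.integral_add_adjacent_intervals (hc.intervalIntegrable _ _)
      (hc.intervalIntegrable _ _)
  have hpos2 : 0 < ∫ t in a'..b', h t :=
    intervalIntegral.intervalIntegral_pos_of_pos_on (hc.intervalIntegrable _ _) hmid hab
  have hnn1 : 0 ≤ ∫ t in (0:ℝ)..a', h t :=
    intervalIntegral.integral_nonneg ha0 (fun t _ => hnn t)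
  have hnn2 : 0 ≤ ∫ t in b'..1, h t :=
    intervalIntegral.integral_nonneg hb1 (fun t _ => hnn t)
  have : 0 < ∫ t in (0:ℝ)..1, h t := by
    rw [← hsplit2, ← hsplit1]
    linarith
  rw [hint] at this
  exact lt_irrefl 0 this

/-! ### the Gramian -/

variable {n m : ℕ}

lemma contexp {𝔸 : Type*} [NormedRing 𝔸] [NormedAlgebra ℝ 𝔸] [CompleteSpace 𝔸] (B : 𝔸) :
    Continuous fun t : ℝ => exp (t • B) := by
  letI : NormedAlgebra ℚ 𝔸 := NormedAlgebra.restrictScalars ℚ ℝ 𝔸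
  exact exp_continuous.comp (continuous_id.smul continuous_const)

/-- the Gramian integrand -/
def gmat (A : Matrix (Fin n) (Fin n) ℝ) (C : Matrix (Fin m) (Fin n) ℝ) (t : ℝ) :
    Matrix (Fin n) (Fin n) ℝ :=
  exp (t • Aᵀ) * (Cᵀ * C) * exp (t • A)

lemma gmat_cont (A : Matrix (Fin n) (Fin n) ℝ) (C : Matrix (Fin m) (Fin n) ℝ) :
    Continuous (gmat A C) :=
  ((contexp Aᵀ).mul continuous_const).mul (contexp A)

/-- observability Gramian over `[0,1]` with negative time -/
def Wmat (A : Matrix (Fin n) (Fin n) ℝ) (C : Matrix (Fin m) (Fin n) ℝ) :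
    Matrix (Fin n) (Fin n) ℝ :=
  ∫ t in (0:ℝ)..1, gmat A C (-t)

lemma hasDerivAt_exp_neg {𝔸 : Type*} [NormedRing 𝔸] [NormedAlgebra ℝ 𝔸] [CompleteSpace 𝔸]
    (B : 𝔸) (t : ℝ) :
    HasDerivAt (fun s : ℝ => exp ((-s) • B)) (-(B * exp ((-t) • B))) t := by
  have h1 : HasDerivAt (fun u : ℝ => exp (u • B)) (B * exp ((-t) • B)) (-t) :=
    hasDerivAt_exp_smul_const' B (-t)
  have h2 : HasDerivAt (fun s : ℝ => -s) (-1 : ℝ) t := (hasDerivAt_id t).neg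
  have := h1.scomp t h2
  simpa [Function.comp_def] using this

lemma hasDerivAt_exp_neg' {𝔸 : Type*} [NormedRing 𝔸] [NormedAlgebra ℝ 𝔸] [CompleteSpace 𝔸]
    (B : 𝔸) (t : ℝ) :
    HasDerivAt (fun s : ℝ => exp ((-s) • B)) (-(exp ((-t) • B) * B)) t := by
  have h1 : HasDerivAt (fun u : ℝ => exp (u • B)) (exp ((-t) • B) * B) (-t) :=
    hasDerivAt_exp_smul_const B (-t)
  have h2 : HasDerivAt (fun s : ℝ => -s) (-1 : ℝ) t := (hasDerivAt_id t).neg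
  have := h1.scomp t h2
  simpa [Function.comp_def] using this

lemma gmat_neg_hasDeriv (A : Matrix (Fin n) (Fin n) ℝ) (C : Matrix (Fin m) (Fin n) ℝ) (t : ℝ) :
    HasDerivAt (fun s : ℝ => gmat A C (-s))
      (-(Aᵀ * gmat A C (-t) + gmat A C (-t) * A)) t := by
  have hu : HasDerivAt (fun s : ℝ => exp ((-s) • Aᵀ)) (-(Aᵀ * exp ((-t) • Aᵀ))) t :=
    hasDerivAt_exp_neg Aᵀ t
  have he : HasDerivAt (fun s : ℝ => exp ((-s) • A)) (-(exp ((-t) • A) * A)) t :=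
    hasDerivAt_exp_neg' A t
  have h1 := (hu.mul_const (Cᵀ * C)).mul he
  have : (fun s : ℝ => exp ((-s) • Aᵀ) * (Cᵀ * C) * exp ((-s) • A))
      = fun s : ℝ => gmat A C (-s) := by
    funext s; simp [gmat]
  simp only [Pi.mul_def] at h1
  rw [this] at h1
  refine HasDerivAt.congr_deriv h1 ?_
  simp only [gmat, neg_mul, mul_neg, Matrix.mul_assoc, neg_add]

/-- left/right multiplication CLM -/
def lyapCLM (A : Matrix (Fin n) (Fin n) ℝ) :
    Matrix (Fin n) (Fin n) ℝ →L[ℝ] Matrix (Fin n) (Fin n) ℝ :=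
  LinearMap.toContinuousLinearMap (LinearMap.mulLeft ℝ Aᵀ + LinearMap.mulRight ℝ A)

lemma lyapCLM_apply (A X : Matrix (Fin n) (Fin n) ℝ) :
    lyapCLM A X = Aᵀ * X + X * A := rfl

lemma gmat_neg_intble (A : Matrix (Fin n) (Fin n) ℝ) (C : Matrix (Fin m) (Fin n) ℝ) :
    @IntervalIntegrable _ _ NormedAddGroup.toENormedAddMonoid (fun t : ℝ => gmat A C (-t))
      MeasureTheory.volume 0 1 :=
  ((gmat_cont A C).comp continuous_neg).intervalIntegrable 0 1

lemma gmat_zero (A : Matrix (Fin n) (Fin n) ℝ) (C : Matrix (Fin m) (Fin n) ℝ) :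
    gmat A C 0 = Cᵀ * C := by
  simp [gmat, exp_zero]

lemma W_lyap (A : Matrix (Fin n) (Fin n) ℝ) (C : Matrix (Fin m) (Fin n) ℝ) :
    Aᵀ * Wmat A C + Wmat A C * A = Cᵀ * C - gmat A C (-1) := by
  have hderiv : ∀ t ∈ Set.uIcc (0:ℝ) 1,
      HasDerivAt (fun s : ℝ => gmat A C (-s))
        (-(lyapCLM A (gmat A C (-t)))) t := by
    intro t _
    simpa [lyapCLM_apply] using gmat_neg_hasDeriv A C t
  have hint : @IntervalIntegrable _ _ NormedAddGroup.toENormedAddMonoid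
      (fun t : ℝ => -(lyapCLM A (gmat A C (-t))))
      MeasureTheory.volume 0 1 :=
    (((lyapCLM A).continuous.comp ((gmat_cont A C).comp continuous_neg)).neg).intervalIntegrable 0 1
  have hftc := intervalIntegral.integral_eq_sub_of_hasDerivAt hderiv hint
  have hcomm : ∫ t in (0:ℝ)..1, lyapCLM A (gmat A C (-t))
      = lyapCLM A (Wmat A C) :=
    (lyapCLM A).intervalIntegral_comp_comm (gmat_neg_intble A C)
  rw [intervalIntegral.integral_neg, hcomm] at hftc
  have : lyapCLM A (Wmat A C) = gmat A C 0 - gmat A C (-1) := by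
    have h0 : gmat A C (-0) = gmat A C 0 := by norm_num
    rw [h0] at hftc
    rw [← neg_sub (gmat A C (-1)) (gmat A C 0), ← hftc, neg_neg]
  rw [lyapCLM_apply, gmat_zero] at this
  exact this

/-- transpose CLM -/
def trCLM (n : ℕ) : Matrix (Fin n) (Fin n) ℝ →L[ℝ] Matrix (Fin n) (Fin n) ℝ :=
  LinearMap.toContinuousLinearMap
    { toFun := fun X => Xᵀ
      map_add' := fun X Y => Matrix.transpose_add X Y
      map_smul' := fun r X => Matrix.transpose_smul r X }

lemma gmat_transpose (A : Matrix (Fin n) (Fin n) ℝ) (C : Matrix (Fin m) (Fin n) ℝ) (t : ℝ) :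
    (gmat A C t)ᵀ = gmat A C t := by
  have h1 : (exp (t • A))ᵀ = exp (t • Aᵀ) := by
    rw [← Matrix.exp_transpose, Matrix.transpose_smul]
  have h2 : (exp (t • Aᵀ))ᵀ = exp (t • A) := by
    rw [← Matrix.exp_transpose, Matrix.transpose_smul, Matrix.transpose_transpose]
  simp [gmat, Matrix.transpose_mul, h1, h2, Matrix.mul_assoc]

lemma W_symm (A : Matrix (Fin n) (Fin n) ℝ) (C : Matrix (Fin m) (Fin n) ℝ) :
    (Wmat A C)ᵀ = Wmat A C := by
  have : (Wmat A C)ᵀ = trCLM n (Wmat A C) := rfl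
  rw [this, Wmat]
  erw [← (trCLM n).intervalIntegral_comp_comm (gmat_neg_intble A C)]
  have : ∀ t : ℝ, trCLM n (gmat A C (-t)) = gmat A C (-t) := fun t => gmat_transpose A C (-t)
  exact intervalIntegral.integral_congr fun t _ => this t

/-! ### complexified Gramian integrand factors -/

lemma cx_exp_smul (A : Matrix (Fin n) (Fin n) ℝ) (s : ℝ) :
    exp (s • cx A) = cx (exp (s • A)) := by
  rw [cx_exp, cx_smul]

lemma exp_smul_conjTranspose (A : Matrix (Fin n) (Fin n) ℝ) (s : ℝ) :
    (exp (s • cx A))ᴴ = exp (s • cx Aᵀ) := by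
  rw [cx_exp_smul, cx_conjTranspose, cx_exp_smul,
    show (exp (s • A))ᵀ = exp (s • Aᵀ) from by
      rw [← Matrix.exp_transpose, Matrix.transpose_smul]]

lemma cx_gmat (A : Matrix (Fin n) (Fin n) ℝ) (C : Matrix (Fin m) (Fin n) ℝ) (s : ℝ) :
    cx (gmat A C s)
      = (cx C * exp (s • cx A))ᴴ * (cx C * exp (s • cx A)) := by
  rw [Matrix.conjTranspose_mul, exp_smul_conjTranspose, cx_conjTranspose]
  unfold gmat
  rw [cx_mul, cx_mul, cx_mul, ← cx_exp_smul, ← cx_exp_smul]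
  simp only [Matrix.mul_assoc]

/-- the fundamental vanishing function -/
def phi (A : Matrix (Fin n) (Fin n) ℝ) (C : Matrix (Fin m) (Fin n) ℝ) (v : Fin n → ℂ)
    (s : ℝ) : Fin m → ℂ :=
  cx C *ᵥ (exp (s • cx A) *ᵥ v)

lemma quad_gmat (A : Matrix (Fin n) (Fin n) ℝ) (C : Matrix (Fin m) (Fin n) ℝ)
    (v : Fin n → ℂ) (s : ℝ) :
    star v ⬝ᵥ (cx (gmat A C s) *ᵥ v)
      = ((∑ j, Complex.normSq (phi A C v s j) : ℝ) : ℂ) := by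
  rw [cx_gmat, quad_factor]
  have : (cx C * exp (s • cx A)) *ᵥ v = phi A C v s := by
    rw [← Matrix.mulVec_mulVec]; rfl
  rw [this, star_dot_self]

/-! ### the core observability consequence -/

lemma core (A : Matrix (Fin n) (Fin n) ℝ) (C : Matrix (Fin m) (Fin n) ℝ)
    (hobs : IsObservable A C) (v : Fin n → ℂ)
    (hv : ∀ τ : ℝ, 0 < τ → phi A C v τ = 0) : v = 0 := by
  set av : Fin n → ℝ := fun i => (v i).re with hav
  set bv : Fin n → ℝ := fun i => (v i).im with hbv
  have key : ∀ τ : ℝ, 0 < τ →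
      C *ᵥ (exp (τ • A) *ᵥ av) = 0 ∧ C *ᵥ (exp (τ • A) *ᵥ bv) = 0 := by
    intro τ hτ
    have h0 := hv τ hτ
    unfold phi at h0
    rw [cx_exp_smul, Matrix.mulVec_mulVec, ← cx_mul] at h0
    set P := C * exp (τ • A) with hP
    have hre : ∀ j, (P *ᵥ av) j = 0 ∧ (P *ᵥ bv) j = 0 := by
      intro j
      have hj := congrFun h0 j
      have hexpand : (cx P *ᵥ v) j
          = (((P *ᵥ av) j : ℝ) : ℂ) + (((P *ᵥ bv) j : ℝ) : ℂ) * Complex.I := by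
        simp only [Matrix.mulVec, dotProduct, cx, Matrix.map_apply]
        push_cast
        rw [Finset.sum_mul, ← Finset.sum_add_distrib]
        refine Finset.sum_congr rfl fun i _ => ?_
        rw [← Complex.re_add_im (v i)]
        ring
      rw [hexpand] at hj
      have hre' := congrArg Complex.re hj
      have him' := congrArg Complex.im hj
      simp at hre' him'
      exact ⟨hre', him'⟩
    constructor
    · funext j
      have := (hre j).1
      rw [← Matrix.mulVec_mulVec] at this
      simpa using this
    · funext j
      have := (hre j).2
      rw [← Matrix.mulVec_mulVec] at this
      simpa using this
  have ha : av = 0 := by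
    by_contra hne
    obtain ⟨τ, hτ, hO⟩ := hobs av hne
    exact hO (key τ hτ).1
  have hb : bv = 0 := by
    by_contra hne
    obtain ⟨τ, hτ, hO⟩ := hobs bv hne
    exact hO (key τ hτ).2
  funext i
  have h1 : (v i).re = 0 := congrFun ha i
  have h2 : (v i).im = 0 := congrFun hb i
  exact Complex.ext h1 h2

/-! ### positive definiteness of the Gramian -/

lemma phi_cont (A : Matrix (Fin n) (Fin n) ℝ) (C : Matrix (Fin m) (Fin n) ℝ)
    (v : Fin n → ℂ) : Continuous (phi A C v) := by
  unfold phi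
  have : Continuous fun s : ℝ => exp (s • cx A) := contexp (cx A)
  exact (sandwichCLM (cx C) v).continuous.comp this

lemma phi_analytic (A : Matrix (Fin n) (Fin n) ℝ) (C : Matrix (Fin m) (Fin n) ℝ)
    (v : Fin n → ℂ) : AnalyticOnNhd ℝ (phi A C v) Set.univ := by
  intro t _
  have hσ : AnalyticAt ℝ (fun s : ℝ => s • cx A) t :=
    (LinearMap.toContinuousLinearMap (LinearMap.toSpanSingleton ℝ _ (cx A))).analyticAt t
  have hexp : AnalyticAt ℝ exp (t • cx A) := exp_analytic _
  have h2 : AnalyticAt ℝ (exp ∘ fun s : ℝ => s • cx A) t :=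
    hexp.comp_of_eq hσ rfl
  have hΛ : AnalyticAt ℝ (sandwichCLM (cx C) v) (exp (t • cx A)) :=
    (sandwichCLM (cx C) v).analyticAt _
  exact hΛ.comp_of_eq h2 rfl

lemma quadW (A : Matrix (Fin n) (Fin n) ℝ) (C : Matrix (Fin m) (Fin n) ℝ)
    (hobs : IsObservable A C) (v : Fin n → ℂ) :
    ∃ r : ℝ, star v ⬝ᵥ (cx (Wmat A C) *ᵥ v) = (r : ℂ) ∧ 0 ≤ r ∧ (v ≠ 0 → 0 < r) := by
  classical
  set h : ℝ → ℝ := fun t => ∑ j, Complex.normSq (phi A C v (-t) j) with hh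
  have hcont : Continuous h := by
    apply continuous_finset_sum
    intro j _
    exact Complex.continuous_normSq.comp
      (((continuous_apply j).comp (phi_cont A C v)).comp continuous_neg)
  have hnn : ∀ t, 0 ≤ h t := fun t =>
    Finset.sum_nonneg fun j _ => Complex.normSq_nonneg _
  -- express the quadratic form as integral of h
  have hq : star v ⬝ᵥ (cx (Wmat A C) *ᵥ v) = ((∫ t in (0:ℝ)..1, h t : ℝ) : ℂ) := by
    have h1 : cx (Wmat A C) = ∫ t in (0:ℝ)..1, cx (gmat A C (-t)) := by
      rw [show cx (Wmat A C) = cxCLM n (Wmat A C) from rfl, Wmat]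
      erw [← (cxCLM n).intervalIntegral_comp_comm (gmat_neg_intble A C)]
      rfl
    have h2 : star v ⬝ᵥ (cx (Wmat A C) *ᵥ v)
        = ∫ t in (0:ℝ)..1, star v ⬝ᵥ (cx (gmat A C (-t)) *ᵥ v) := by
      rw [show star v ⬝ᵥ (cx (Wmat A C) *ᵥ v) = quadCLM v (cx (Wmat A C)) from rfl, h1]
      erw [← (quadCLM v).intervalIntegral_comp_comm]
      · rfl
      · exact ((cxCLM n).continuous.comp
          ((gmat_cont A C).comp continuous_neg)).intervalIntegrable 0 1
    rw [h2]
    have h3 : ∀ t : ℝ, star v ⬝ᵥ (cx (gmat A C (-t)) *ᵥ v) = ((h t : ℝ) : ℂ) := fun t =>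
      quad_gmat A C v (-t)
    simp only [h3]
    exact intervalIntegral.integral_ofReal
  refine ⟨∫ t in (0:ℝ)..1, h t, hq, ?_, ?_⟩
  · exact intervalIntegral.integral_nonneg zero_le_one fun t _ => hnn t
  · intro hv0
    rcases lt_or_eq_of_le (intervalIntegral.integral_nonneg zero_le_one fun t _ => hnn t) with
      hlt | heq
    · exact hlt
    · exfalso
      -- integral is zero, derive v = 0
      have hzero : ∀ t ∈ Set.Ioo (0:ℝ) 1, h t = 0 := fun t ht =>
        zero_of_integral_zero hcont hnn heq.symm ht
      have hphi0 : ∀ s ∈ Set.Ioo (-1 : ℝ) 0, phi A C v s = 0 := by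
        intro s hs
        have := hzero (-s) ⟨by linarith [hs.2], by linarith [hs.1]⟩
        rw [hh] at this
        simp only [neg_neg] at this
        funext j
        have hj := (Finset.sum_eq_zero_iff_of_nonneg
          (fun j _ => Complex.normSq_nonneg (phi A C v s j))).mp this j (Finset.mem_univ j)
        exact Complex.normSq_eq_zero.mp hj
      have hglobal : Set.EqOn (phi A C v) 0 Set.univ := by
        apply (phi_analytic A C v).eqOn_zero_of_preconnected_of_eventuallyEq_zero
          isPreconnected_univ (Set.mem_univ (-1/2 : ℝ))
        have hmem : Set.Ioo (-1 : ℝ) 0 ∈ nhds (-1/2 : ℝ) :=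
          Ioo_mem_nhds (by norm_num) (by norm_num)
        exact Filter.eventuallyEq_of_mem hmem hphi0
      have : v = 0 := core A C hobs v fun τ _ => hglobal (Set.mem_univ τ)
      exact hv0 this

lemma W_unit (A : Matrix (Fin n) (Fin n) ℝ) (C : Matrix (Fin m) (Fin n) ℝ)
    (hobs : IsObservable A C) : IsUnit (Wmat A C).det := by
  rw [isUnit_iff_ne_zero]
  intro h0
  obtain ⟨x, hx0, hWx⟩ := Matrix.exists_mulVec_eq_zero_iff.mpr h0
  have hvx : cx (Wmat A C) *ᵥ cv x = 0 := by
    rw [cx_mulVec, hWx]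
    funext i; simp [cv]
  obtain ⟨r, hqr, _, hpos⟩ := quadW A C hobs (cv x)
  have hcvx : cv x ≠ 0 := fun h => hx0 (cv_eq_zero h)
  have hrpos := hpos hcvx
  rw [hvx, dotProduct_zero] at hqr
  have : r = 0 := by exact_mod_cast hqr.symm
  rw [this] at hrpos
  exact lt_irrefl 0 hrpos

/-! ### eigenvector lemma -/

lemma exp_mulVec_eigen (B : Matrix (Fin k) (Fin k) ℂ) (v : Fin k → ℂ) (z : ℂ)
    (hv : B *ᵥ v = z • v) (τ : ℝ) : ∃ c : ℂ, exp (τ • B) *ᵥ v = c • v := by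
  have hpow : ∀ j : ℕ, (B ^ j) *ᵥ v = z ^ j • v := by
    intro j
    induction j with
    | zero => simp
    | succ j ih =>
      rw [pow_succ', ← Matrix.mulVec_mulVec, ih, Matrix.mulVec_smul, hv, smul_smul,
        pow_succ]
  have hsum : Summable fun j : ℕ => ((j.factorial : ℝ))⁻¹ • (τ • B) ^ j :=
    expSeries_summable' (𝕂 := ℝ) (τ • B)
  have h1 : exp (τ • B) *ᵥ v
      = ∑' j : ℕ, mvCLM (a := k) v (((j.factorial : ℝ))⁻¹ • (τ • B) ^ j) := by
    rw [exp_eq_tsum ℝ]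
    exact (mvCLM v).map_tsum hsum
  have h2 : ∀ j : ℕ, mvCLM (a := k) v (((j.factorial : ℝ))⁻¹ • (τ • B) ^ j)
      = (((j.factorial : ℝ))⁻¹ • ((τ : ℂ) * z) ^ j) • v := by
    intro j
    show ((((j.factorial : ℝ))⁻¹ • (τ • B) ^ j) *ᵥ v) = _
    rw [smul_pow, Matrix.smul_mulVec, Matrix.smul_mulVec, hpow j]
    funext i
    simp only [Pi.smul_apply, Complex.real_smul, smul_eq_mul]
    push_cast
    ring
  have hsum2 : Summable fun j : ℕ => ((j.factorial : ℝ))⁻¹ • ((τ : ℂ) * z) ^ j :=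
    expSeries_summable' (𝕂 := ℝ) ((τ : ℂ) * z)
  refine ⟨∑' j : ℕ, ((j.factorial : ℝ))⁻¹ • ((τ : ℂ) * z) ^ j, ?_⟩
  rw [h1]
  simp only [h2]
  exact Summable.tsum_smul_const hsum2 v

/-! ### main theorem, internal version -/

theorem main (n m : ℕ) (A : Matrix (Fin n) (Fin n) ℝ)
    (C : Matrix (Fin m) (Fin n) ℝ) (hobs : IsObservable A C) :
    ∃ L : Matrix (Fin n) (Fin m) ℝ,
      ∀ z : ℂ, (z • (1 : Matrix (Fin n) (Fin n) ℂ) - (A + L * C).map Complex.ofReal).det = 0 →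
        z.re < 0 := by
  classical
  obtain ⟨W, hW⟩ : ∃ W, W = Wmat A C := ⟨_, rfl⟩
  have hdet : IsUnit W.det := hW ▸ W_unit A C hobs
  have hWinv : W⁻¹ * W = 1 := Matrix.nonsing_inv_mul W hdet
  have hWinv' : W * W⁻¹ = 1 := Matrix.mul_nonsing_inv W hdet
  refine ⟨-(W⁻¹ * Cᵀ), ?_⟩
  intro z hz
  by_contra hzre
  push_neg at hzre
  obtain ⟨M, hM⟩ : ∃ M, M = A + -(W⁻¹ * Cᵀ) * C := ⟨_, rfl⟩
  -- eigenvector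
  have hdet0 : (z • (1 : Matrix (Fin n) (Fin n) ℂ) - cx M).det = 0 := by rw [hM]; exact hz
  obtain ⟨v, hv0, hvec⟩ := Matrix.exists_mulVec_eq_zero_iff.mpr hdet0
  have hMv : cx M *ᵥ v = z • v := by
    rw [Matrix.sub_mulVec, Matrix.smul_mulVec, Matrix.one_mulVec] at hvec
    exact (sub_eq_zero.mp hvec).symm
  -- real Lyapunov identity
  have hWt : Wᵀ = W := hW ▸ W_symm A C
  have hWit : (W⁻¹)ᵀ = W⁻¹ := by
    rw [Matrix.transpose_nonsing_inv, hWt]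
  have hMt : Mᵀ = Aᵀ + -(Cᵀ * (C * W⁻¹)) := by
    rw [hM, Matrix.transpose_add, Matrix.transpose_mul, Matrix.transpose_neg,
      Matrix.transpose_mul, Matrix.transpose_transpose, hWit, Matrix.mul_neg]
  have e1 : Cᵀ * (C * W⁻¹) * W = Cᵀ * C := by
    rw [Matrix.mul_assoc (Cᵀ) _ W, Matrix.mul_assoc C _ W, hWinv, Matrix.mul_one]
  have e2 : W * (-(W⁻¹ * Cᵀ) * C) = -(Cᵀ * C) := by
    rw [Matrix.neg_mul, Matrix.mul_neg, ← Matrix.mul_assoc, ← Matrix.mul_assoc, hWinv',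
      Matrix.one_mul]
  have hMl : Mᵀ * W + W * M = -((Cᵀ * C) + gmat A C (-1)) := by
    have hexp2 : Mᵀ * W + W * M = Aᵀ * W + -(Cᵀ * C) + (W * A + -(Cᵀ * C)) := by
      rw [hMt, hM, Matrix.add_mul, Matrix.mul_add, Matrix.neg_mul, e1, e2]
    rw [hexp2, show Aᵀ * W + -(Cᵀ * C) + (W * A + -(Cᵀ * C))
        = (Aᵀ * W + W * A) - (Cᵀ * C) - (Cᵀ * C) from by abel, hW, W_lyap A C]
    abel
  -- complexified Lyapunov identity
  have hMlc : (cx M)ᵀ * cx W + cx W * cx M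
      = -((cx Cᵀ * cx C) + cx (gmat A C (-1))) := by
    have h := congrArg cx hMl
    rw [cx_add, cx_mul, cx_mul, cx_transpose, cx_neg, cx_add, cx_mul] at h
    exact h
  -- quadratic forms
  obtain ⟨r, hqr, hrnn, hrpos⟩ := quadW A C hobs v
  rw [← hW] at hqr
  have hr : 0 < r := hrpos hv0
  obtain ⟨s1, hs1def⟩ : ∃ s, s = ∑ j, Complex.normSq ((cx C *ᵥ v) j) := ⟨_, rfl⟩
  obtain ⟨s2, hs2def⟩ : ∃ s, s = ∑ j, Complex.normSq (phi A C v (-1) j) := ⟨_, rfl⟩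
  have hs1nn : 0 ≤ s1 := hs1def ▸ Finset.sum_nonneg fun j _ => Complex.normSq_nonneg _
  have hs2nn : 0 ≤ s2 := hs2def ▸ Finset.sum_nonneg fun j _ => Complex.normSq_nonneg _
  have hLHS : star v ⬝ᵥ (((cx M)ᵀ * cx W + cx W * cx M) *ᵥ v)
      = ((2 * z.re * r : ℝ) : ℂ) := by
    rw [Matrix.add_mulVec, dotProduct_add]
    have t1 : star v ⬝ᵥ (((cx M)ᵀ * cx W) *ᵥ v) = (starRingEnd ℂ z) * (r : ℂ) := by
      rw [← Matrix.mulVec_mulVec, dotProduct_mulVec, Matrix.vecMul_transpose,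
        cx_mulVec_star, hMv, star_smul, smul_dotProduct, hqr]
      simp [smul_eq_mul]
    have t2 : star v ⬝ᵥ ((cx W * cx M) *ᵥ v) = z * (r : ℂ) := by
      rw [← Matrix.mulVec_mulVec, hMv, Matrix.mulVec_smul, dotProduct_smul, hqr]
      simp [smul_eq_mul]
    rw [t1, t2, show (starRingEnd ℂ) z * (r:ℂ) + z * (r:ℂ) = (z + starRingEnd ℂ z) * (r:ℂ)
      from by ring, Complex.add_conj]
    push_cast
    ring
  have hRHS : star v ⬝ᵥ ((-((cx Cᵀ * cx C) + cx (gmat A C (-1)))) *ᵥ v)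
      = ((-(s1 + s2) : ℝ) : ℂ) := by
    rw [Matrix.neg_mulVec, dotProduct_neg, Matrix.add_mulVec, dotProduct_add]
    have u1 : star v ⬝ᵥ ((cx Cᵀ * cx C) *ᵥ v) = ((s1 : ℝ) : ℂ) := by
      rw [← cx_conjTranspose, quad_factor, star_dot_self, hs1def]
    have u2 : star v ⬝ᵥ (cx (gmat A C (-1)) *ᵥ v) = ((s2 : ℝ) : ℂ) := by
      rw [quad_gmat, hs2def]
    rw [u1, u2]
    push_cast
    ring
  have hfinal : ((2 * z.re * r : ℝ) : ℂ) = ((-(s1 + s2) : ℝ) : ℂ) := by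
    rw [← hLHS, ← hRHS, hMlc]
  have hreal : 2 * z.re * r = -(s1 + s2) := by exact_mod_cast hfinal
  have hprod : 0 ≤ 2 * z.re * r := by positivity
  have hs1z : s1 = 0 := by linarith
  have hw1 : cx C *ᵥ v = 0 := by
    funext j
    have hj : Complex.normSq ((cx C *ᵥ v) j) = 0 := by
      refine (Finset.sum_eq_zero_iff_of_nonneg
        (fun i _ => Complex.normSq_nonneg ((cx C *ᵥ v) i))).mp ?_ j (Finset.mem_univ j)
      rw [← hs1def, hs1z]
    exact Complex.normSq_eq_zero.mp hj
  have hAv : cx A *ᵥ v = z • v := by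
    have hMc : cx M = cx A + cx (-(W⁻¹ * Cᵀ)) * cx C := by
      rw [hM, cx_add, cx_mul]
    rw [hMc, Matrix.add_mulVec, ← Matrix.mulVec_mulVec, hw1, Matrix.mulVec_zero,
      add_zero] at hMv
    exact hMv
  have hphiall : ∀ τ : ℝ, 0 < τ → phi A C v τ = 0 := by
    intro τ _
    obtain ⟨c, hc⟩ := exp_mulVec_eigen (cx A) v z hAv τ
    unfold phi
    rw [hc, Matrix.mulVec_smul, hw1, smul_zero]
  exact hv0 (core A C hobs v hphiall)

end

end Stmt14

/-- If `(A,C)` is observable, then `(A,C)` is detectable: there exists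
`L ∈ ℝ^{n×m}` such that `A + LC` is stable (all eigenvalues have negative real part). -/
theorem statement_14 (n m : ℕ) (A : Matrix (Fin n) (Fin n) ℝ)
    (C : Matrix (Fin m) (Fin n) ℝ) (hobs : IsObservable A C) :
    ∃ L : Matrix (Fin n) (Fin m) ℝ,
      ∀ z : ℂ, (z • (1 : Matrix (Fin n) (Fin n) ℂ) - (A + L * C).map Complex.ofReal).det = 0 →
        z.re < 0 := by
  exact Stmt14.main n m A C hobs
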